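/- Let α, γ ∈ ℝ and let f : ℝ → ℝ be a C⁴ function satisfying f''''(z) = f''(z) for every z ∈ ℝ, with f(0) = 0 and f'(0) = 0. If there exists M ≥ 0 such that |f(z) − (γ·z²/2 + α·z)| ≤ M for all z ≥ 0, then γ = 0 and f(z) = α·(exp(−z) + z − 1) for all z ∈ ℝ. -/

import Mathlib

/-! Since `f'''' = f''`, the function `f''` solves `y'' = y` and `f'' - f` is affine, so `f` is a
combination of `exp z`, `exp (-z)`, `z` and `1`. A bounded deviation from `γ z² / 2 + α z` on
`[0, ∞)` forces, in turn, the coefficient of `exp z` to vanish, then `γ = 0`, then the coefficient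
of `z` to equal `α`; the clamped conditions `f 0 = f' 0 = 0` fix the remaining two. -/

open Real Filter Asymptotics

theorem eq_mul_exp_of_hasDerivAt_const_mul {u : ℝ → ℝ} {k : ℝ}
    (hu : ∀ x, HasDerivAt u (k * u x) x) (x : ℝ) : u x = u 0 * exp (k * x) := by
  have hw : ∀ x, HasDerivAt (fun x => u x * exp (-(k * x))) 0 x := fun x => by
    have he : HasDerivAt (fun x => exp (-(k * x))) (exp (-(k * x)) * -k) x := by
      simpa using ((hasDerivAt_id x).const_mul k).fun_neg.exp
    exact ((hu x).fun_mul he).congr_deriv (by ring)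
  have hconst := is_const_of_deriv_eq_zero (fun x => (hw x).differentiableAt)
    (fun x => (hw x).deriv) x 0
  simp only [mul_zero, neg_zero, exp_zero, mul_one] at hconst
  rw [← hconst, mul_assoc, ← exp_add, neg_add_cancel, exp_zero, mul_one]

theorem eq_add_mul_of_hasDerivAt_of_hasDerivAt_zero {h h' : ℝ → ℝ}
    (hh : ∀ x, HasDerivAt h (h' x) x) (hh' : ∀ x, HasDerivAt h' 0 x) (x : ℝ) :
    h x = h 0 + h' 0 * x := by
  have h'_const : ∀ x, h' x = h' 0 := fun x => is_const_of_deriv_eq_zero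
    (fun x => (hh' x).differentiableAt) (fun x => (hh' x).deriv) x 0
  have hw : ∀ x, HasDerivAt (fun x => h x - h' 0 * x) 0 x := fun x => by
    simpa [h'_const x] using (hh x).fun_sub ((hasDerivAt_id x).const_mul (h' 0))
  have := is_const_of_deriv_eq_zero (fun x => (hw x).differentiableAt)
    (fun x => (hw x).deriv) x 0
  simp only [mul_zero, sub_zero] at this
  linarith

theorem eq_cosh_sinh_of_hasDerivAt_of_hasDerivAt {y y' : ℝ → ℝ}
    (hy : ∀ x, HasDerivAt y (y' x) x) (hy' : ∀ x, HasDerivAt y' (y x) x) (x : ℝ) :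
    y x = y 0 * cosh x + y' 0 * sinh x := by
  have hsum := eq_mul_exp_of_hasDerivAt_const_mul (u := fun x => y' x + y x) (k := 1)
    fun x => ((hy' x).fun_add (hy x)).congr_deriv (by ring)
  have hdiff := eq_mul_exp_of_hasDerivAt_const_mul (u := fun x => y' x - y x) (k := -1)
    fun x => ((hy' x).fun_sub (hy x)).congr_deriv (by ring)
  simp only [one_mul, neg_one_mul] at hsum hdiff
  rw [cosh_eq, sinh_eq]
  linear_combination (hsum x - hdiff x) / 2

theorem eq_cosh_sinh_sub_affine_of_hasDerivAt {f f₁ f₂ f₃ : ℝ → ℝ}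
    (hf : ∀ x, HasDerivAt f (f₁ x) x) (hf₁ : ∀ x, HasDerivAt f₁ (f₂ x) x)
    (hf₂ : ∀ x, HasDerivAt f₂ (f₃ x) x) (hf₃ : ∀ x, HasDerivAt f₃ (f₂ x) x) (x : ℝ) :
    f x = f₂ 0 * cosh x + f₃ 0 * sinh x - (f₂ 0 - f 0) - (f₃ 0 - f₁ 0) * x := by
  have hf₂_eq := eq_cosh_sinh_of_hasDerivAt_of_hasDerivAt hf₂ hf₃ x
  have h_affine := eq_add_mul_of_hasDerivAt_of_hasDerivAt_zero
    (h := fun x => f₂ x - f x) (h' := fun x => f₃ x - f₁ x)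
    (fun x => (hf₂ x).fun_sub (hf x))
    (fun x => ((hf₃ x).fun_sub (hf₁ x)).congr_deriv (sub_self _)) x
  linarith

theorem eq_zero_of_const_mul_add_isBigO_one {ι 𝕜 : Type*} [NormedField 𝕜] {l : Filter ι}
    [l.NeBot] {φ g : ι → 𝕜} {a : 𝕜} (hφ : Tendsto (fun x => ‖φ x‖) l atTop) (hg : g =o[l] φ)
    (hb : (fun x => a * φ x + g x) =O[l] fun _ => (1 : ℝ)) : a = 0 := by
  have haφ : (fun x => a * φ x) =o[l] φ :=
    ((hb.trans_isLittleO (isLittleO_one_left_iff ℝ |>.2 hφ)).sub hg).congr_left (by simp)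
  by_contra ha
  refine isLittleO_irrefl ?_ ((isLittleO_const_mul_left_iff ha).1 haφ)
  exact (hφ.eventually_gt_atTop 0).frequently.mono fun x hx => norm_pos_iff.1 hx

theorem exp_add_quadratic_coeffs_of_isBigO_one {A B c d γ α : ℝ}
    (h : (fun z => A * exp z + B * exp (-z) + c * z + d - (γ * z ^ 2 / 2 + α * z))
      =O[atTop] fun _ => (1 : ℝ)) : A = 0 ∧ γ = 0 ∧ c = α := by
  have hbdd : (fun z => B * exp (-z) + d) =O[atTop] fun _ => (1 : ℝ) :=
    ((tendsto_exp_neg_atTop_nhds_zero.const_mul B).add_const d).isBigO_one ℝ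
  have hexp : Tendsto (fun z => ‖exp z‖) atTop atTop := by
    simpa [Real.norm_eq_abs] using tendsto_exp_atTop
  have hsq : Tendsto (fun z : ℝ => ‖z ^ 2‖) atTop atTop := by
    simpa only [norm_pow, Function.comp_def] using
      (tendsto_pow_atTop two_ne_zero).comp tendsto_norm_atTop_atTop
  have hA : A = 0 := by
    refine eq_zero_of_const_mul_add_isBigO_one hexp (g := fun z =>
      B * exp (-z) + d + (c - α) * z - γ / 2 * z ^ 2) ?_ (h.congr_left fun z => by ring)
    refine ((hbdd.trans_isLittleO (isLittleO_one_left_iff ℝ |>.2 hexp)).add ?_).sub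
      ((isLittleO_pow_exp_atTop (n := 2)).const_mul_left _)
    simpa using (isLittleO_pow_exp_atTop (n := 1)).const_mul_left (c - α)
  subst hA
  have hγ : -(γ / 2) = 0 := by
    refine eq_zero_of_const_mul_add_isBigO_one hsq (g := fun z =>
      B * exp (-z) + d + (c - α) * z) ?_ (h.congr_left fun z => by ring)
    refine (hbdd.trans_isLittleO (isLittleO_one_left_iff ℝ |>.2 hsq)).add ?_
    simpa using (isLittleO_pow_pow_atTop_of_lt (𝕜 := ℝ) one_lt_two).const_mul_left (c - α)
  have hγ : γ = 0 := by linarith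
  subst hγ
  have hc : c - α = 0 :=
    eq_zero_of_const_mul_add_isBigO_one tendsto_norm_atTop_atTop
      (hbdd.trans_isLittleO (isLittleO_one_left_iff ℝ |>.2 tendsto_norm_atTop_atTop))
      (h.congr_left fun z => by ring)
  exact ⟨rfl, rfl, by linarith⟩

theorem ContDiff.hasDerivAt_iteratedDeriv {𝕜 F : Type*} [NontriviallyNormedField 𝕜]
    [NormedAddCommGroup F] [NormedSpace 𝕜 F] {f : 𝕜 → F} {n : WithTop ℕ∞}
    (hf : ContDiff 𝕜 n f) {k : ℕ} (hk : k < n) (x : 𝕜) :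
    HasDerivAt (iteratedDeriv k f) (iteratedDeriv (k + 1) f x) x := by
  rw [iteratedDeriv_succ]
  exact (hf.differentiable_iteratedDeriv k hk x).hasDerivAt

/-- Second-order matching at x = 0: a clamped C⁴ solution of f'''' = f'' such that
    f(z) - (γ·z²/2 + α·z) is bounded on [0, ∞) forces γ = 0 and
    f(z) = α·(e^{-z} + z - 1). -/
theorem stmt_8 (α γ : ℝ) (f : ℝ → ℝ) (hf : ContDiff ℝ 4 f)
    (hode : ∀ z : ℝ, iteratedDeriv 4 f z = iteratedDeriv 2 f z)
    (h0 : f 0 = 0) (h1 : deriv f 0 = 0)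
    (hbdd : ∃ M : ℝ, 0 ≤ M ∧ ∀ z : ℝ, 0 ≤ z → |f z - (γ * z ^ 2 / 2 + α * z)| ≤ M) :
    γ = 0 ∧ ∀ z : ℝ, f z = α * (Real.exp (-z) + z - 1) := by
  set c := iteratedDeriv 3 f 0
  set d := iteratedDeriv 2 f 0
  have hclosed : ∀ z, f z = (d + c) / 2 * exp z + (d - c) / 2 * exp (-z) - c * z - d := by
    intro z
    have := eq_cosh_sinh_sub_affine_of_hasDerivAt
      (by simpa only [iteratedDeriv_zero, zero_add] using
        hf.hasDerivAt_iteratedDeriv (k := 0) (by norm_num))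
      (hf.hasDerivAt_iteratedDeriv (k := 1) (by norm_num))
      (hf.hasDerivAt_iteratedDeriv (k := 2) (by norm_num))
      (fun x => hode x ▸ hf.hasDerivAt_iteratedDeriv (k := 3) (by norm_num) x) z
    rw [this, cosh_eq, sinh_eq, iteratedDeriv_one, h0, h1]
    ring
  obtain ⟨M, -, hM⟩ := hbdd
  have hO : (fun z => f z - (γ * z ^ 2 / 2 + α * z)) =O[atTop] fun _ => (1 : ℝ) :=
    .of_bound M <| (eventually_ge_atTop 0).mono fun z hz => by simpa using hM z hz
  obtain ⟨hA, hγ, hc⟩ := exp_add_quadratic_coeffs_of_isBigO_one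
    (A := (d + c) / 2) (B := (d - c) / 2) (c := -c) (d := -d) (γ := γ) (α := α)
    (hO.congr_left fun z => by rw [hclosed z]; ring)
  refine ⟨hγ, fun z => ?_⟩
  rw [hclosed z]
  linear_combination (exp z + exp (-z) - 2) * hA + (exp (-z) + z - 1) * hc
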